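/- arXiv:2508.15062 — 2 statements merged into one kernel-verified Lean document; each statement's English description precedes it below -/
import Mathlib

section
/- Let K be a field of characteristic zero, I ⊆ R an ideal, ζ ∈ K^n, and let φ be the K-algebra automorphism of R with φ(x_i) = x_i − ζ_i for all i. Let B ⊆ ℕ^n be a finite downward-closed (staircase) set of exponents such that the residues { x^α + I : α ∈ B } form a K-basis of R/I. Then the residues { x^α + φ(I) : α ∈ B } form a K-basis of R/φ(I), where φ(I) denotes the image ideal. In particular, a complete staircase basis of a local Artinian algebra supported at ζ remains a basis after translating the support to the origin. -/
/-!
Let `V ⊆ R` be the span of the monomials `x^α`, `α ∈ B`. The residues of these monomials form a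
basis of `R/I` exactly when `V` is a vector-space complement of `I` in `R`. A translation
`x_i ↦ x_i + c_i` sends `x^α` to a combination of monomials `x^β` with `β ≤ α`, so, `B` being a
staircase, `φ` and `φ⁻¹` both preserve `V`, i.e. `φ(V) = V`. Applying the linear automorphism
`φ` to the decomposition `R = V ⊕ I` gives `R = V ⊕ φ(I)`.
-/

open MvPolynomial

theorem Submodule.linearIndependent_comp_and_span_eq_top_iff_isCompl
    {R M N ι : Type*} [Ring R] [AddCommGroup M] [Module R M] [AddCommGroup N] [Module R N]
    {v : ι → M} (hv : LinearIndependent R v) {f : M →ₗ[R] N} (hf : Function.Surjective f) :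
    LinearIndependent R (f ∘ v) ∧ span R (Set.range (f ∘ v)) = ⊤ ↔
      IsCompl (span R (Set.range v)) (LinearMap.ker f) := by
  rw [isCompl_iff, codisjoint_iff, Set.range_comp, ← map_span,
    LinearMap.map_eq_top_iff (LinearMap.range_eq_top.2 hf)]
  exact and_congr_left' ⟨range_ker_disjoint, hv.map⟩

namespace MvPolynomial

variable {σ R : Type*} [CommSemiring R]

theorem C_mem_restrictSupport_Iic (c : R) (a : σ →₀ ℕ) :
    C c ∈ restrictSupport R (Set.Iic a) := by
  rw [C_apply]
  exact (monomial_mem_restrictSupport R).2 (.inl (Set.mem_Iic.2 zero_le))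

theorem one_mem_restrictSupport_Iic_zero :
    (1 : MvPolynomial σ R) ∈ restrictSupport R (Set.Iic 0) :=
  C_1 (σ := σ) (R := R) ▸ C_mem_restrictSupport_Iic 1 0

theorem mul_mem_restrictSupport_Iic {a b : σ →₀ ℕ} {p q : MvPolynomial σ R}
    (hp : p ∈ restrictSupport R (Set.Iic a)) (hq : q ∈ restrictSupport R (Set.Iic b)) :
    p * q ∈ restrictSupport R (Set.Iic (a + b)) := by
  refine restrictSupport_mono R ?_ (restrictSupport_add R _ _ ▸ Submodule.mul_mem_mul hp hq)
  exact Set.add_subset_iff.2 fun x hx y hy => Set.mem_Iic.2 (add_le_add hx hy)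

theorem pow_mem_restrictSupport_Iic {a : σ →₀ ℕ} {p : MvPolynomial σ R}
    (hp : p ∈ restrictSupport R (Set.Iic a)) (k : ℕ) :
    p ^ k ∈ restrictSupport R (Set.Iic (k • a)) := by
  induction k with
  | zero => simpa using one_mem_restrictSupport_Iic_zero
  | succ k ih => simpa [pow_succ, succ_nsmul] using mul_mem_restrictSupport_Iic ih hp

theorem X_add_C_mem_restrictSupport_Iic (i : σ) (c : R) :
    X i + C c ∈ restrictSupport R (Set.Iic (Finsupp.single i 1)) :=
  Submodule.add_mem _ ((monomial_mem_restrictSupport R).2 (.inl (Set.mem_Iic.2 le_rfl)))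
    (C_mem_restrictSupport_Iic c _)

theorem map_monomial_one_mem_restrictSupport_Iic (ψ : MvPolynomial σ R →ₐ[R] MvPolynomial σ R)
    (hψ : ∀ i, ψ (X i) ∈ restrictSupport R (Set.Iic (Finsupp.single i 1))) (α : σ →₀ ℕ) :
    ψ (monomial α 1) ∈ restrictSupport R (Set.Iic α) := by
  induction α using Finsupp.induction with
  | zero => simpa using one_mem_restrictSupport_Iic_zero
  | single_add i k α _ _ ih =>
    rw [← mul_one (1 : R), ← monomial_mul, ← X_pow_eq_monomial, map_mul, map_pow]
    simpa using mul_mem_restrictSupport_Iic (pow_mem_restrictSupport_Iic (hψ i) k) ih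

theorem restrictSupport_le_comap_of_isLowerSet {s : Set (σ →₀ ℕ)} (hs : IsLowerSet s)
    (ψ : MvPolynomial σ R →ₐ[R] MvPolynomial σ R)
    (hψ : ∀ i, ψ (X i) ∈ restrictSupport R (Set.Iic (Finsupp.single i 1))) :
    restrictSupport R s ≤ (restrictSupport R s).comap ψ.toLinearMap := by
  refine (restrictSupport_eq_span R s).trans_le (Submodule.span_le.2 ?_)
  rintro _ ⟨α, hα, rfl⟩
  exact restrictSupport_mono R (fun β hβ => hs hβ hα)
    (map_monomial_one_mem_restrictSupport_Iic ψ hψ α)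

theorem map_restrictSupport_of_isLowerSet {s : Set (σ →₀ ℕ)} (hs : IsLowerSet s)
    (φ : MvPolynomial σ R ≃ₐ[R] MvPolynomial σ R)
    (hφ : ∀ i, φ (X i) ∈ restrictSupport R (Set.Iic (Finsupp.single i 1)))
    (hφ' : ∀ i, φ.symm (X i) ∈ restrictSupport R (Set.Iic (Finsupp.single i 1))) :
    (restrictSupport R s).map φ.toLinearMap = restrictSupport R s := by
  refine le_antisymm (Submodule.map_le_iff_le_comap.2 ?_) fun p hp => ?_
  · exact restrictSupport_le_comap_of_isLowerSet hs φ.toAlgHom hφ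
  · exact ⟨φ.symm p, restrictSupport_le_comap_of_isLowerSet hs φ.symm.toAlgHom hφ' hp, by simp⟩

end MvPolynomial

theorem AlgEquiv.symm_X_eq_X_add_C {K σ : Type*} [CommRing K]
    (φ : MvPolynomial σ K ≃ₐ[K] MvPolynomial σ K) {ζ : σ → K}
    (hφ : ∀ i, φ (X i) = X i - C (ζ i)) (i : σ) :
    φ.symm (X i) = X i + C (ζ i) :=
  φ.injective <| by
    have hC : φ (C (ζ i)) = C (ζ i) := φ.commutes (ζ i)
    simp [hφ, hC]

theorem Ideal.ker_mkₐ_toLinearMap {K A : Type*} [CommSemiring K] [CommRing A] [Algebra K A]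
    (I : Ideal A) :
    LinearMap.ker (Ideal.Quotient.mkₐ K I).toLinearMap = I.restrictScalars K := by
  ext; simp [Ideal.Quotient.eq_zero_iff_mem]

theorem Ideal.restrictScalars_map_algEquiv {K A : Type*} [CommSemiring K] [CommRing A] [Algebra K A]
    (I : Ideal A) (φ : A ≃ₐ[K] A) :
    (I.map φ.toAlgHom.toRingHom).restrictScalars K = (I.restrictScalars K).map φ.toLinearMap := by
  rw [show φ.toAlgHom.toRingHom = (φ.toRingEquiv : A →+* A) from rfl,
    Ideal.map_comap_of_equiv]
  ext p
  simp [Submodule.mem_map_equiv]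

theorem stmt7_general {K : Type*} [Field K] {n : ℕ} (ζ : Fin n → K)
    (I : Ideal (MvPolynomial (Fin n) K))
    (φ : MvPolynomial (Fin n) K ≃ₐ[K] MvPolynomial (Fin n) K)
    (hφ : ∀ i, φ (X i) = X i - C (ζ i))
    (B : Finset (Fin n →₀ ℕ)) (hB : ∀ α ∈ B, ∀ β : Fin n →₀ ℕ, β ≤ α → β ∈ B)
    (hli : LinearIndependent K
      (fun α : B => Ideal.Quotient.mk I (monomial (α : Fin n →₀ ℕ) (1 : K))))
    (hsp : Submodule.span K
      (Set.range fun α : B => Ideal.Quotient.mk I (monomial (α : Fin n →₀ ℕ) (1 : K))) = ⊤) :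
    LinearIndependent K
      (fun α : B => Ideal.Quotient.mk (I.map φ.toAlgHom.toRingHom)
        (monomial (α : Fin n →₀ ℕ) (1 : K))) ∧
    Submodule.span K
      (Set.range fun α : B => Ideal.Quotient.mk (I.map φ.toAlgHom.toRingHom)
        (monomial (α : Fin n →₀ ℕ) (1 : K))) = ⊤ := by
  set v : B → MvPolynomial (Fin n) K := fun α => monomial (α : Fin n →₀ ℕ) 1
  set V := restrictSupport K (B : Set (Fin n →₀ ℕ))
  have hV : Submodule.span K (Set.range v) = V := by
    simp only [V, restrictSupport_eq_span, Set.image_eq_range]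
    rfl
  have hv : LinearIndependent K v := hli.of_comp (Ideal.Quotient.mkₐ K I).toLinearMap
  have hI : IsCompl V (I.restrictScalars K) := by
    rw [← hV, ← Ideal.ker_mkₐ_toLinearMap]
    exact (Submodule.linearIndependent_comp_and_span_eq_top_iff_isCompl hv
      (Ideal.Quotient.mkₐ_surjective K I)).1 ⟨hli, hsp⟩
  have hφV : V.map φ.toLinearMap = V :=
    map_restrictSupport_of_isLowerSet (fun _ _ hle hα => hB _ hα _ hle) φ
      (fun i => by
        rw [hφ, sub_eq_add_neg, ← C_neg]
        exact X_add_C_mem_restrictSupport_Iic i _)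
      (fun i => φ.symm_X_eq_X_add_C hφ i ▸ X_add_C_mem_restrictSupport_Iic i (ζ i))
  have hJ : IsCompl V ((I.map φ.toAlgHom.toRingHom).restrictScalars K) := by
    rw [Ideal.restrictScalars_map_algEquiv, ← hφV]
    exact (Submodule.orderIsoMapComap φ.toLinearEquiv).isCompl_iff.1 hI
  rw [← hV, ← Ideal.ker_mkₐ_toLinearMap] at hJ
  exact (Submodule.linearIndependent_comp_and_span_eq_top_iff_isCompl hv
    (Ideal.Quotient.mkₐ_surjective K _)).2 hJ

/-- if the residues of the monomials `x^α`, `α ∈ B` (with `B` a finite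
staircase set of exponents), form a `K`-basis of `R/I`, then the residues of the same
monomials form a `K`-basis of `R/φ(I)`, where `φ` is the translation automorphism
`φ(x_i) = x_i − ζ_i`. -/
theorem stmt7 {K : Type*} [Field K] [CharZero K] {n : ℕ} (ζ : Fin n → K)
    (I : Ideal (MvPolynomial (Fin n) K))
    (φ : MvPolynomial (Fin n) K ≃ₐ[K] MvPolynomial (Fin n) K)
    (hφ : ∀ i, φ (X i) = X i - C (ζ i))
    (B : Finset (Fin n →₀ ℕ)) (hB : ∀ α ∈ B, ∀ β : Fin n →₀ ℕ, β ≤ α → β ∈ B)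
    (hli : LinearIndependent K
      (fun α : B => Ideal.Quotient.mk I (monomial (α : Fin n →₀ ℕ) (1 : K))))
    (hsp : Submodule.span K
      (Set.range fun α : B => Ideal.Quotient.mk I (monomial (α : Fin n →₀ ℕ) (1 : K))) = ⊤) :
    LinearIndependent K
      (fun α : B => Ideal.Quotient.mk (I.map φ.toAlgHom.toRingHom)
        (monomial (α : Fin n →₀ ℕ) (1 : K))) ∧
    Submodule.span K
      (Set.range fun α : B => Ideal.Quotient.mk (I.map φ.toAlgHom.toRingHom)
        (monomial (α : Fin n →₀ ℕ) (1 : K))) = ⊤ :=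
  stmt7_general ζ I φ hφ B hB hli hsp
end

section
/- Let K be a field of characteristic zero and Λ ∈ R* such that A := R/Ann(Λ) is finite-dimensional over K. Then A is Gorenstein with dual generator Λ: concretely, for every K-linear functional g : A → K there exists p ∈ R such that g(q + Ann(Λ)) = Λ(p·q) for all q ∈ R. Equivalently, the map R → Hom_K(A, K) sending p to the functional (q + Ann(Λ)) ↦ Λ(p·q) is well defined and surjective, i.e. the dual of A is a cyclic A-module generated by Λ under contraction. -/
open MvPolynomial

/-- The annihilator `Ann(Λ) = { p : ∀ q, Λ(p·q) = 0 }` of a linear functional `Λ` on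
`R = K[x_1,…,x_n]`, as an ideal of `R`. -/
def annIdeal {K : Type*} [Field K] {n : ℕ}
    (Λ : Module.Dual K (MvPolynomial (Fin n) K)) : Ideal (MvPolynomial (Fin n) K) where
  carrier := {p | ∀ q, Λ (p * q) = 0}
  add_mem' := by
    intro a b ha hb q
    rw [add_mul, map_add, ha q, hb q, add_zero]
  zero_mem' := by
    intro q
    rw [zero_mul, map_zero]
  smul_mem' := by
    intro c p hp q
    have h := hp (c * q)
    rw [smul_eq_mul, show c * p * q = p * (c * q) by ring]
    exact h

/-! `Λ` descends to `A = R ⧸ Ann(Λ)`, and there `(a, b) ↦ Λ(a·b)` is nondegenerate by the very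
definition of `Ann(Λ)`. A nondegenerate bilinear form on a finite-dimensional space identifies it
with its dual, so every functional on `A` is `Λ(a · -)` for some `a ∈ A`; lift `a` to `R`. -/

theorem Module.Dual.exists_eq_mul_left_of_nondegenerate {K A : Type*} [Field K] [Ring A]
    [Algebra K A] [FiniteDimensional K A] (φ : Module.Dual K A)
    (hφ : ∀ a, (∀ b, φ (a * b) = 0) → a = 0) (g : Module.Dual K A) :
    ∃ a, ∀ b, g b = φ (a * b) := by
  let B : LinearMap.BilinForm K A := (LinearMap.mul K A).compr₂ φ
  have hB : B.Nondegenerate := .ofSeparatingLeft hφ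
  exact ⟨(B.toDual hB).symm g, fun b => (B.apply_toDual_symm_apply g b).symm⟩

section AnnQuotient

variable {K : Type*} [Field K] {n : ℕ} (Λ : Module.Dual K (MvPolynomial (Fin n) K))

noncomputable def annQuotientDual : Module.Dual K (MvPolynomial (Fin n) K ⧸ annIdeal Λ) :=
  ((annIdeal Λ).restrictScalars K).liftQ Λ (fun p hp => by simpa using hp 1) ∘ₗ
    (Submodule.Quotient.restrictScalarsEquiv K (annIdeal Λ)).symm.toLinearMap

@[simp]
theorem annQuotientDual_mk (q : MvPolynomial (Fin n) K) :
    annQuotientDual Λ (Ideal.Quotient.mk (annIdeal Λ) q) = Λ q :=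
  rfl

theorem annQuotientDual_nondegenerate (a : MvPolynomial (Fin n) K ⧸ annIdeal Λ)
    (ha : ∀ b, annQuotientDual Λ (a * b) = 0) : a = 0 := by
  obtain ⟨p, rfl⟩ := Ideal.Quotient.mk_surjective a
  refine Ideal.Quotient.eq_zero_iff_mem.mpr fun q => ?_
  simpa only [← map_mul, annQuotientDual_mk] using ha (Ideal.Quotient.mk _ q)

end AnnQuotient

theorem stmt11_general {K : Type*} [Field K] {n : ℕ}
    (Λ : Module.Dual K (MvPolynomial (Fin n) K))
    (hfin : FiniteDimensional K (MvPolynomial (Fin n) K ⧸ annIdeal Λ)) :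
    ∀ g : Module.Dual K (MvPolynomial (Fin n) K ⧸ annIdeal Λ),
      ∃ p : MvPolynomial (Fin n) K, ∀ q : MvPolynomial (Fin n) K,
        g (Ideal.Quotient.mk (annIdeal Λ) q) = Λ (p * q) := by
  intro g
  obtain ⟨a, ha⟩ := (annQuotientDual Λ).exists_eq_mul_left_of_nondegenerate
    (annQuotientDual_nondegenerate Λ) g
  obtain ⟨p, rfl⟩ := Ideal.Quotient.mk_surjective a
  exact ⟨p, fun q => by rw [ha, ← map_mul, annQuotientDual_mk]⟩

/-- if `A = R/Ann(Λ)` is finite dimensional, then `A` is Gorenstein with dual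
generator `Λ`: every `K`-linear functional on `A` is of the form `q + Ann(Λ) ↦ Λ(p·q)` for
some `p ∈ R`, i.e. the dual of `A` is a cyclic `A`-module generated by `Λ` under
contraction. -/
theorem stmt11 {K : Type*} [Field K] [CharZero K] {n : ℕ}
    (Λ : Module.Dual K (MvPolynomial (Fin n) K))
    (hfin : FiniteDimensional K (MvPolynomial (Fin n) K ⧸ annIdeal Λ)) :
    ∀ g : Module.Dual K (MvPolynomial (Fin n) K ⧸ annIdeal Λ),
      ∃ p : MvPolynomial (Fin n) K, ∀ q : MvPolynomial (Fin n) K,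
        g (Ideal.Quotient.mk (annIdeal Λ) q) = Λ (p * q) :=
  stmt11_general Λ hfin
end
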